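/- arXiv:2402.17158 — 7 statements merged into one kernel-verified Lean document; each statement's English description precedes it below -/
import Mathlib

section
/- Let G be a locally compact second countable abelian group, let P₀ ⊆ G be a closed U-uniformly discrete set, and let P be any element of the punctured hull Ω×_{P₀} = (closure of the G-orbit of P₀ in the Chabauty space of closed subsets of G) minus {∅}. Then P − P ⊆ closure(P₀ − P₀). -/
open scoped Pointwise
open Set Filter Topology

/-- Convergence `P_n → P` in the Chabauty topology, via its sequential characterization:
(i) every convergent sequence of points `p_k ∈ P_{n_k}` (along a subsequence) has its limit in
`P`, and (ii) every point of `P` is a limit of points `p_n ∈ P_n`. -/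
def ChabautyTendsto {G : Type*} [TopologicalSpace G] (Pn : ℕ → Set G) (P : Set G) : Prop :=
  (∀ φ : ℕ → ℕ, StrictMono φ → ∀ (p : ℕ → G) (x : G),
    (∀ k, p k ∈ Pn (φ k)) → Tendsto p atTop (𝓝 x) → x ∈ P) ∧
  (∀ x ∈ P, ∃ p : ℕ → G, (∀ n, p n ∈ Pn n) ∧ Tendsto p atTop (𝓝 x))

/-- `P` belongs to the hull of `P₀`, i.e. it is a Chabauty limit of translates `P₀ - g_n`. -/
def InHull {G : Type*} [AddCommGroup G] [TopologicalSpace G] (P₀ P : Set G) : Prop :=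
  ∃ g : ℕ → G, ChabautyTendsto (fun n => P₀ - ({g n} : Set G)) P

theorem Set.sub_singleton_sub_sub_singleton {G : Type*} [AddCommGroup G] (A : Set G) (g : G) :
    (A - {g}) - (A - {g}) = A - A := by
  rw [sub_sub_sub_comm, singleton_sub_singleton, sub_self, singleton_zero, sub_zero]

theorem ChabautyTendsto.sub_subset_closure {G : Type*} [AddGroup G] [TopologicalSpace G]
    [ContinuousSub G] {Pn : ℕ → Set G} {P S : Set G} (hP : ChabautyTendsto Pn P)
    (hS : ∀ n, Pn n - Pn n ⊆ S) : P - P ⊆ closure S := by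
  rintro _ ⟨x, hx, y, hy, rfl⟩
  obtain ⟨p, hp, hpx⟩ := hP.2 x hx
  obtain ⟨q, hq, hqy⟩ := hP.2 y hy
  exact mem_closure_of_tendsto (hpx.sub hqy) (.of_forall fun n => hS n (sub_mem_sub (hp n) (hq n)))

theorem stmt7_general {G : Type*} [AddCommGroup G] [TopologicalSpace G] [IsTopologicalAddGroup G]
    (P₀ : Set G)
    (P : Set G) (hP : InHull P₀ P) :
    P - P ⊆ closure (P₀ - P₀) := by
  obtain ⟨g, hg⟩ := hP
  exact hg.sub_subset_closure fun n => (sub_singleton_sub_sub_singleton P₀ (g n)).subset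

/-- If `P₀` is a closed `U`-uniformly discrete set and `P` is a nonempty element of the
(punctured) hull of `P₀`, then `P - P ⊆ closure (P₀ - P₀)`. -/
theorem stmt7 {G : Type*} [AddCommGroup G] [TopologicalSpace G] [IsTopologicalAddGroup G]
    [LocallyCompactSpace G] [SecondCountableTopology G]
    (U : Set G) (hUo : IsOpen U) (hU0 : (0 : G) ∈ U)
    (P₀ : Set G) (hcl : IsClosed P₀) (hud : (P₀ - P₀) ∩ U = {0})
    (P : Set G) (hP : InHull P₀ P) (hPne : P.Nonempty) :
    P - P ⊆ closure (P₀ - P₀) :=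
  stmt7_general P₀ P hP
end

section
/- Let P₀ ⊆ G be a closed U-uniformly discrete set, Ω×_{P₀} the punctured hull of P₀, and T_{P₀} = {P ∈ Ω×_{P₀} : 0 ∈ P} the canonical transversal. Then the set of return times Ξ = {g ∈ G : (T_{P₀} − g) ∩ T_{P₀} ≠ ∅} satisfies Ξ ⊆ closure(P₀ − P₀), and consequently Ξ ∩ U = {0}, i.e. T_{P₀} is a U-separated cross-section. -/
/-! The points `g` and `0` of a return set `P ∈ T_{P₀}` are limits of points of the same
translates `P₀ - g_n`, so `g - 0` is a limit of differences of points of `P₀`. Since `U` is open,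
a point of `closure (P₀ - P₀)` in `U` lies in `closure {0}`, which may exceed `{0}` as `G` need
not be T₁; translating by some `p ∈ P₀` and using that `P₀` is closed puts it back in
`P₀ - P₀`, where uniform discreteness forces it to be `0`. Finally `0` is a
return time because `P₀ - p` is a (constant) Chabauty limit in `T_{P₀}`. -/

open scoped Pointwise
open Set Filter Topology

/-- The canonical transversal `T_{P₀}`: elements of the punctured hull containing `0`. -/
def canonicalT {G : Type*} [AddCommGroup G] [TopologicalSpace G] (P₀ : Set G) : Set (Set G) :=
  {P : Set G | InHull P₀ P ∧ (0 : G) ∈ P}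

section

variable {G : Type*}

theorem ChabautyTendsto.const [TopologicalSpace G] {P : Set G} (hP : IsClosed P) :
    ChabautyTendsto (fun _ => P) P :=
  ⟨fun _ _ _ _ hp hx => hP.mem_of_tendsto hx (Eventually.of_forall hp),
    fun x hx => ⟨fun _ => x, fun _ => hx, tendsto_const_nhds⟩⟩

variable [AddCommGroup G]

theorem sub_mem_sub_of_mem_sub_singleton {s : Set G} {g x y : G} (hx : x ∈ s - {g})
    (hy : y ∈ s - {g}) : x - y ∈ s - s := by
  rw [Set.sub_singleton] at hx hy
  obtain ⟨a, ha, rfl⟩ := hx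
  obtain ⟨b, hb, rfl⟩ := hy
  exact ⟨a, ha, b, hb, (sub_sub_sub_cancel_right a b g).symm⟩

theorem mem_of_zero_mem_sub_singleton {s : Set G} {g : G} (h : (0 : G) ∈ s - {g}) : g ∈ s := by
  rw [Set.sub_singleton] at h
  obtain ⟨a, ha, hag⟩ := h
  rwa [← sub_eq_zero.mp hag]

variable [TopologicalSpace G]

theorem InHull.sub_mem_closure [ContinuousSub G] {P₀ P : Set G} (hP : InHull P₀ P) {x y : G}
    (hx : x ∈ P) (hy : y ∈ P) : x - y ∈ closure (P₀ - P₀) := by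
  obtain ⟨g, -, happrox⟩ := hP
  obtain ⟨p, hp, hpx⟩ := happrox x hx
  obtain ⟨q, hq, hqy⟩ := happrox y hy
  exact mem_closure_of_tendsto (hpx.sub hqy)
    (Eventually.of_forall fun n => sub_mem_sub_of_mem_sub_singleton (hp n) (hq n))

theorem sub_singleton_mem_canonicalT [IsTopologicalAddGroup G] {P₀ : Set G} (hP₀ : IsClosed P₀)
    {p : G} (hp : p ∈ P₀) : P₀ - {p} ∈ canonicalT P₀ := by
  have hclosed : IsClosed (P₀ - {p}) := by
    rw [Set.sub_singleton]
    exact (Homeomorph.subRight p).isClosedMap _ hP₀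
  exact ⟨⟨fun _ => p, ChabautyTendsto.const hclosed⟩, p, hp, p, rfl, sub_self p⟩

theorem closure_sub_self_inter_subset [ContinuousAdd G] {U P₀ : Set G} (hU : IsOpen U)
    (hP₀ : IsClosed P₀) {p : G} (hp : p ∈ P₀) (hud : (P₀ - P₀) ∩ U = {0}) :
    closure (P₀ - P₀) ∩ U ⊆ {0} := by
  rintro x ⟨hxcl, hxU⟩
  have hx0 : x ∈ closure ({0} : Set G) := by
    rw [← hud, Set.inter_comm]
    exact hU.inter_closure ⟨hxU, hxcl⟩
  have hpx : p + x ∈ P₀ := by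
    rw [← hP₀.closure_eq]
    exact map_mem_closure (continuous_const.add continuous_id) hx0 (by simpa using hp)
  rw [← hud]
  exact ⟨⟨p + x, hpx, p, hp, add_sub_cancel_left p x⟩, hxU⟩

end

theorem stmt8_general {G : Type*} [AddCommGroup G] [TopologicalSpace G] [IsTopologicalAddGroup G]
    (U : Set G) (hUo : IsOpen U) (hU0 : (0 : G) ∈ U)
    (P₀ : Set G) (hcl : IsClosed P₀) (hne : P₀.Nonempty) (hud : (P₀ - P₀) ∩ U = {0}) :
    {g : G | ∃ P ∈ canonicalT P₀, P - ({g} : Set G) ∈ canonicalT P₀} ⊆ closure (P₀ - P₀) ∧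
    {g : G | ∃ P ∈ canonicalT P₀, P - ({g} : Set G) ∈ canonicalT P₀} ∩ U = {0} := by
  obtain ⟨p, hp⟩ := hne
  have hreturn : {g : G | ∃ P ∈ canonicalT P₀, P - ({g} : Set G) ∈ canonicalT P₀}
      ⊆ closure (P₀ - P₀) := by
    rintro g ⟨P, ⟨hP, h0⟩, -, hg⟩
    simpa using hP.sub_mem_closure (mem_of_zero_mem_sub_singleton hg) h0
  refine ⟨hreturn, subset_antisymm
    (fun x hx => closure_sub_self_inter_subset hUo hcl hp hud ⟨hreturn hx.1, hx.2⟩) ?_⟩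
  rintro _ rfl
  have hT := sub_singleton_mem_canonicalT hcl hp
  exact ⟨⟨P₀ - {p}, hT, by simpa using hT⟩, hU0⟩

/-- The set of return times of the canonical transversal `T_{P₀}` is contained in
`closure (P₀ - P₀)`; consequently it meets `U` only in `0`, i.e. `T_{P₀}` is a `U`-separated
cross-section. -/
theorem stmt8 {G : Type*} [AddCommGroup G] [TopologicalSpace G] [IsTopologicalAddGroup G]
    [LocallyCompactSpace G] [SecondCountableTopology G]
    (U : Set G) (hUo : IsOpen U) (hU0 : (0 : G) ∈ U)
    (P₀ : Set G) (hcl : IsClosed P₀) (hne : P₀.Nonempty) (hud : (P₀ - P₀) ∩ U = {0}) :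
    {g : G | ∃ P ∈ canonicalT P₀, P - ({g} : Set G) ∈ canonicalT P₀} ⊆ closure (P₀ - P₀) ∧
    {g : G | ∃ P ∈ canonicalT P₀, P - ({g} : Set G) ∈ canonicalT P₀} ∩ U = {0} :=
  stmt8_general U hUo hU0 P₀ hcl hne hud
end

section
/- Let X be a standard Borel G-space with a U-separated cross-section Y, let Δ ⊆ G, and suppose there is an open neighbourhood W ⊆ U of 0 with (Ξ_Y − Δ) ∩ W = {0}. Then for every Borel set V₀ ⊆ G with V₀ − V₀ ⊆ W, every Borel set B ⊆ Y, and all g₁,…,g_r ∈ Δ: V₀.(B ∩ ⋂_{k=1}^r (−g_k).B) = (V₀.B) ∩ ⋂_{k=1}^r (−g_k).(V₀.B). -/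
open scoped Pointwise
open Set

/-!
If `x = v +ᵥ b` and `g +ᵥ x = v' +ᵥ b'` with `v, v' ∈ V₀`, `b, b' ∈ B ⊆ Y` and `g ∈ Δ`, then
`v - v' + g` is a return time of `Y`, so `v - v'` lies in `(Ξ_Y - Δ) ∩ W = {0}`. Hence `v = v'`,
and cancelling `v` gives `g +ᵥ b = b' ∈ B`. The other inclusion only uses that `G` is abelian.
-/

section SeparatedCrossSection

variable {G X : Type*} [AddCommGroup G] [AddAction G X]

/-- The return-time set `Ξ_Y` of `Y ⊆ X`. -/
def returnTimes (Y : Set X) : Set G := {g : G | ∃ y ∈ Y, g +ᵥ y ∈ Y}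

theorem vadd_inter_iInter_vadd_subset {ι : Type*} (V : Set G) (B : Set X) (g : ι → G) :
    V +ᵥ (B ∩ ⋂ i, g i +ᵥ B) ⊆ (V +ᵥ B) ∩ ⋂ i, g i +ᵥ (V +ᵥ B) := by
  refine vadd_inter_subset.trans (inter_subset_inter_right _ ?_)
  refine (vadd_iInter_subset V _).trans (iInter_mono fun i => ?_)
  rw [vadd_comm]

variable {Y : Set X} {Δ W V₀ : Set G}

theorem eq_of_vadd_vadd_eq_vadd (hWsep : (returnTimes Y - Δ) ∩ W = {0}) (hV₀W : V₀ - V₀ ⊆ W)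
    {v v' δ : G} (hv : v ∈ V₀) (hv' : v' ∈ V₀) (hδ : δ ∈ Δ) {b b' : X} (hb : b ∈ Y)
    (hb' : b' ∈ Y) (h : δ +ᵥ (v +ᵥ b) = v' +ᵥ b') : v = v' := by
  have hreturn : v - v' + δ ∈ returnTimes Y := by
    refine ⟨b, hb, ?_⟩
    have : (v - v' + δ) +ᵥ b = -v' +ᵥ (v' +ᵥ b') := by
      rw [← h, vadd_vadd, vadd_vadd]
      congr 1
      abel
    rwa [this, neg_vadd_vadd]
  have hmem : v - v' ∈ (returnTimes Y - Δ) ∩ W :=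
    ⟨⟨_, hreturn, δ, hδ, add_sub_cancel_right _ _⟩, hV₀W (sub_mem_sub hv hv')⟩
  rw [hWsep] at hmem
  exact sub_eq_zero.mp hmem

theorem vadd_inter_iInter_neg_vadd (hWsep : (returnTimes Y - Δ) ∩ W = {0})
    (hV₀W : V₀ - V₀ ⊆ W) {B : Set X} (hBY : B ⊆ Y) {ι : Type*} {g : ι → G}
    (hg : ∀ i, g i ∈ Δ) :
    V₀ +ᵥ (B ∩ ⋂ i, -g i +ᵥ B) = (V₀ +ᵥ B) ∩ ⋂ i, -g i +ᵥ (V₀ +ᵥ B) := by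
  refine (vadd_inter_iInter_vadd_subset V₀ B _).antisymm ?_
  rintro _ ⟨⟨v, hv, b, hb, rfl⟩, hshift⟩
  refine ⟨v, hv, b, ⟨hb, mem_iInter.2 fun i => ?_⟩, rfl⟩
  obtain ⟨v', hv', b', hb', h⟩ := mem_vadd_set_iff_neg_vadd_mem.1 (mem_iInter.1 hshift i)
  rw [neg_neg] at h
  have hvv' := eq_of_vadd_vadd_eq_vadd hWsep hV₀W hv hv' (hg i) (hBY hb) (hBY hb') h.symm
  subst hvv'
  rw [vadd_comm, vadd_left_cancel_iff] at h
  rw [mem_vadd_set_iff_neg_vadd_mem, neg_neg, ← h]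
  exact hb'

end SeparatedCrossSection

theorem stmt9_general {G X : Type*} [AddCommGroup G] [AddAction G X]
    (Y : Set X)
    (Δ : Set G) (W : Set G)
    (hWsep : ({g : G | ∃ y ∈ Y, g +ᵥ y ∈ Y} - Δ) ∩ W = {0})
    (V₀ : Set G) (hV₀W : V₀ - V₀ ⊆ W)
    (B : Set X) (hBY : B ⊆ Y)
    (r : ℕ) (g : Fin r → G) (hg : ∀ k, g k ∈ Δ) :
    V₀ +ᵥ (B ∩ ⋂ k, (-(g k)) +ᵥ B) =
      (V₀ +ᵥ B) ∩ ⋂ k, (-(g k)) +ᵥ (V₀ +ᵥ B) :=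
  vadd_inter_iInter_neg_vadd hWsep hV₀W hBY hg

/-- Action-set identity for separated cross-sections: if `Y` is a `U`-separated cross-section of a
Borel `G`-space `X`, `Δ ⊆ G`, and `W ⊆ U` is an open neighbourhood of `0` with
`(Ξ_Y - Δ) ∩ W = {0}`, then for every `V₀` with `V₀ - V₀ ⊆ W`, every `B ⊆ Y`, and all
`g₁, …, g_r ∈ Δ`:
`V₀.(B ∩ ⋂ₖ (-gₖ).B) = (V₀.B) ∩ ⋂ₖ (-gₖ).(V₀.B)`. -/
theorem stmt9 {G X : Type*} [AddCommGroup G] [TopologicalSpace G] [IsTopologicalAddGroup G]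
    [LocallyCompactSpace G] [SecondCountableTopology G]
    [MeasurableSpace G] [BorelSpace G] [MeasurableSpace X] [AddAction G X]
    (U : Set G) (hUo : IsOpen U) (hU0 : (0 : G) ∈ U)
    (Y : Set X) (hY : MeasurableSet Y)
    (hcross : ∀ x : X, ∃ g : G, ∃ y ∈ Y, x = g +ᵥ y)
    (hsep : {g : G | ∃ y ∈ Y, g +ᵥ y ∈ Y} ∩ U = {0})
    (Δ : Set G) (W : Set G) (hWo : IsOpen W) (hW0 : (0 : G) ∈ W) (hWU : W ⊆ U)
    (hWsep : ({g : G | ∃ y ∈ Y, g +ᵥ y ∈ Y} - Δ) ∩ W = {0})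
    (V₀ : Set G) (hV₀ : MeasurableSet V₀) (hV₀W : V₀ - V₀ ⊆ W)
    (B : Set X) (hB : MeasurableSet B) (hBY : B ⊆ Y)
    (r : ℕ) (g : Fin r → G) (hg : ∀ k, g k ∈ Δ) :
    V₀ +ᵥ (B ∩ ⋂ k, (-(g k)) +ᵥ B) =
      (V₀ +ᵥ B) ∩ ⋂ k, (-(g k)) +ᵥ (V₀ +ᵥ B) :=
  stmt9_general Y Δ W hWsep V₀ hV₀W B hBY r g hg
end

section
/- Let Λ ⊆ G be a countable set, and suppose there is a uniformly discrete set Λ₀ ⊆ G with Λ₀ − Λ₀ ⊆ Λ. Let V₀ and V be neighbourhoods of 0 with V₀ − V₀ ⊆ V, and let ν be a G-invariant Borel probability measure on the punctured hull Ω×_{Λ₀}. Then for every g ∈ G, Σ_{λ∈Λ} χ_V(g + λ) ≥ ν(O_{V₀} ∩ g.O_{V₀}), where O_{V₀} = {P ∈ Ω×_{Λ₀} : P ∩ V₀ ≠ ∅}. -/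
open scoped Pointwise ENNReal
open MeasureTheory Set Filter Topology

/-!
If `P` lies in the hull of `Λ₀`, every difference of two points of `P` is a limit of
differences of points of translates `Λ₀ - g_n`, i.e. of points of `Λ₀ - Λ₀`. When both `P` and
`P - g` meet `V₀`, some such difference `y - a` satisfies `g + (y - a) ∈ V₀ - V₀ ⊆ V`, and since
`V` is open a nearby `λ ∈ Λ₀ - Λ₀ ⊆ Λ` has `g + λ ∈ V`. So the sum is at least `1`, which
bounds any probability.
-/

section

variable {G : Type*} [AddCommGroup G]

theorem sub_mem_sub_of_mem_sub_singleton_s11 {P₀ : Set G} {t p q : G}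
    (hp : p ∈ P₀ - {t}) (hq : q ∈ P₀ - {t}) : p - q ∈ P₀ - P₀ := by
  obtain ⟨b, hb, _, rfl, rfl⟩ := hp
  obtain ⟨c, hc, _, rfl, rfl⟩ := hq
  simpa using sub_mem_sub hb hc

variable [TopologicalSpace G] [IsTopologicalAddGroup G]

theorem InHull.sub_subset_closure {P₀ P : Set G} (hP : InHull P₀ P) :
    P - P ⊆ closure (P₀ - P₀) := by
  rintro _ ⟨x, hx, y, hy, rfl⟩
  obtain ⟨t, -, hlim⟩ := hP
  obtain ⟨p, hp, hpx⟩ := hlim x hx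
  obtain ⟨q, hq, hqy⟩ := hlim y hy
  exact mem_closure_of_tendsto (hpx.sub hqy)
    (Eventually.of_forall fun n => sub_mem_sub_of_mem_sub_singleton_s11 (hp n) (hq n))

theorem InHull.exists_add_mem_of_inter_nonempty {P₀ P V₀ V : Set G}
    (hP : InHull P₀ P) (hVo : IsOpen V) (hV₀V : V₀ - V₀ ⊆ V) {g : G}
    (hPV₀ : (P ∩ V₀).Nonempty) (hPgV₀ : ((P - {g}) ∩ V₀).Nonempty) :
    ∃ l ∈ P₀ - P₀, g + l ∈ V := by
  obtain ⟨y, hyP, hyV₀⟩ := hPV₀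
  obtain ⟨_, ⟨a, haP, b, hb, rfl⟩, haV₀⟩ := hPgV₀
  rw [mem_singleton_iff.1 hb] at haV₀
  have hya : g + (y - a) ∈ V := by
    rw [show g + (y - a) = y - (a - g) by abel]
    exact hV₀V (sub_mem_sub hyV₀ haV₀)
  obtain ⟨l, hgl, hl⟩ := mem_closure_iff.1 (hP.sub_subset_closure (sub_mem_sub hyP haP))
    ((g + ·) ⁻¹' V) (hVo.preimage (continuous_const_add g)) hya
  exact ⟨l, hl, hgl⟩

end

theorem stmt11_general {G : Type*} [AddCommGroup G] [TopologicalSpace G] [IsTopologicalAddGroup G]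
    [MeasurableSpace (Set G)]
    (Λ Λ₀ : Set G)
    (hdiff : Λ₀ - Λ₀ ⊆ Λ)
    (V₀ V : Set G)
    (hVo : IsOpen V) (hV₀V : V₀ - V₀ ⊆ V)
    (ν : Measure (Set G)) [IsProbabilityMeasure ν]
    (g : G) :
    ν ({P : Set G | (InHull Λ₀ P ∧ P.Nonempty) ∧ (P ∩ V₀).Nonempty} ∩
        ((fun P : Set G => P - ({g} : Set G)) ''
          {P : Set G | (InHull Λ₀ P ∧ P.Nonempty) ∧ (P ∩ V₀).Nonempty})) ≤
      ∑' l : Λ, V.indicator (fun _ => (1 : ℝ≥0∞)) (g + (l : G)) := by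
  set S := {P : Set G | (InHull Λ₀ P ∧ P.Nonempty) ∧ (P ∩ V₀).Nonempty} ∩
    ((fun P : Set G => P - ({g} : Set G)) ''
      {P : Set G | (InHull Λ₀ P ∧ P.Nonempty) ∧ (P ∩ V₀).Nonempty})
  rcases S.eq_empty_or_nonempty with hS | ⟨_, ⟨-, hQgV₀⟩, Q, ⟨⟨hQ, -⟩, hQV₀⟩, rfl⟩
  · simp [hS]
  obtain ⟨l, hl, hgl⟩ := hQ.exists_add_mem_of_inter_nonempty hVo hV₀V hQV₀ hQgV₀
  calc ν S ≤ 1 := prob_le_one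
    _ = V.indicator (fun _ => 1) (g + l) := (indicator_of_mem hgl (fun _ => 1)).symm
    _ ≤ _ := ENNReal.le_tsum (⟨l, hdiff hl⟩ : Λ)

/-- If `Λ` is countable, `Λ₀` is uniformly discrete with `Λ₀ - Λ₀ ⊆ Λ`, `V₀ - V₀ ⊆ V` for
neighbourhoods `V₀, V` of `0`, and `ν` is a `G`-invariant probability measure on the punctured
hull of `Λ₀`, then for every `g ∈ G`:
`Σ_{λ ∈ Λ} χ_V(g + λ) ≥ ν(O_{V₀} ∩ g.O_{V₀})`, where
`O_{V₀} = {P ∈ Ω×_{Λ₀} : P ∩ V₀ ≠ ∅}` and `g.O_{V₀}` is its translate. -/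
theorem stmt11 {G : Type*} [AddCommGroup G] [TopologicalSpace G] [IsTopologicalAddGroup G]
    [LocallyCompactSpace G] [SecondCountableTopology G]
    [MeasurableSpace (Set G)]
    (Λ Λ₀ : Set G) (hΛc : Λ.Countable)
    (hud : ∃ U : Set G, IsOpen U ∧ (0 : G) ∈ U ∧ (Λ₀ - Λ₀) ∩ U = {0})
    (hdiff : Λ₀ - Λ₀ ⊆ Λ)
    (V₀ V : Set G) (hV₀o : IsOpen V₀) (hV₀0 : (0 : G) ∈ V₀)
    (hVo : IsOpen V) (hV0 : (0 : G) ∈ V) (hV₀V : V₀ - V₀ ⊆ V)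
    (ν : Measure (Set G)) [IsProbabilityMeasure ν]
    (hνhull : ν {P : Set G | ¬ (InHull Λ₀ P ∧ P.Nonempty)} = 0)
    (hinv : ∀ h : G, Measure.map (fun P : Set G => P - ({h} : Set G)) ν = ν)
    (g : G) :
    ν ({P : Set G | (InHull Λ₀ P ∧ P.Nonempty) ∧ (P ∩ V₀).Nonempty} ∩
        ((fun P : Set G => P - ({g} : Set G)) ''
          {P : Set G | (InHull Λ₀ P ∧ P.Nonempty) ∧ (P ∩ V₀).Nonempty})) ≤
      ∑' l : Λ, V.indicator (fun _ => (1 : ℝ≥0∞)) (g + (l : G)) :=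
  stmt11_general Λ Λ₀ hdiff V₀ V hVo hV₀V ν g
end

section
/- Let Γ be a countable abelian group and f : Γ → [0, M] a bounded non-negative function such that for every Følner sequence (F_n) in Γ, liminf_n (1/|F_n|) Σ_{γ ∈ F_n} f(γ) > 0. Then there exists c > 0 such that {γ ∈ Γ : f(γ) ≥ c} is syndetic in Γ. -/
open scoped Pointwise symmDiff
open Set Filter Topology

section FolnerAux

variable {Γ : Type*} [AddCommGroup Γ] [DecidableEq Γ]

/-- Box set: sums `∑ a_i • e i` with `0 ≤ a_i ≤ m`, `i ≤ n`. -/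
def boxS (e : ℕ → Γ) (n m : ℕ) : Finset Γ :=
  (Fintype.piFinset (fun _ : Fin (n+1) => Finset.range (m+1))).image
    (fun a => ∑ i, a i • e i.val)

lemma boxS_nonempty (e : ℕ → Γ) (n m : ℕ) : (boxS e n m).Nonempty := by
  refine ⟨∑ i : Fin (n+1), (0 : ℕ) • e i.val, Finset.mem_image.2 ⟨fun _ => 0, ?_, rfl⟩⟩
  simp [Fintype.mem_piFinset]

lemma boxS_mono (e : ℕ → Γ) (n : ℕ) {m m' : ℕ} (h : m ≤ m') : boxS e n m ⊆ boxS e n m' := by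
  apply Finset.image_subset_image
  intro a ha
  simp only [Fintype.mem_piFinset, Finset.mem_range] at ha ⊢
  exact fun i => lt_of_lt_of_le (ha i) (by omega)

lemma add_mem_boxS (e : ℕ → Γ) {n m j : ℕ} (hj : j ≤ n) {x : Γ} (hx : x ∈ boxS e n m) :
    x + e j ∈ boxS e n (m+1) := by
  obtain ⟨a, ha, rfl⟩ := Finset.mem_image.1 hx
  simp only [Fintype.mem_piFinset, Finset.mem_range] at ha
  refine Finset.mem_image.2 ⟨Function.update a ⟨j, by omega⟩ (a ⟨j, by omega⟩ + 1), ?_, ?_⟩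
  · simp only [Fintype.mem_piFinset, Finset.mem_range]
    intro i
    rcases eq_or_ne i ⟨j, by omega⟩ with rfl | hi
    · simp only [Function.update_self]; have := ha ⟨j, by omega⟩; omega
    · rw [Function.update_of_ne hi]; exact lt_of_lt_of_le (ha i) (by omega)
  · have : ∀ i : Fin (n+1), (Function.update a ⟨j, by omega⟩ (a ⟨j, by omega⟩ + 1)) i • e i.val
        = a i • e i.val + (if i = ⟨j, by omega⟩ then e i.val else 0) := by
      intro i
      rcases eq_or_ne i ⟨j, by omega⟩ with rfl | hi
      · simp [Function.update_self, succ_nsmul]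
      · simp [Function.update_of_ne hi, hi]
    rw [Finset.sum_congr rfl (fun i _ => this i), Finset.sum_add_distrib,
      Finset.sum_ite_eq' Finset.univ (⟨j, by omega⟩ : Fin (n+1)) (fun i => e i.val)]
    simp

lemma boxS_card_le (e : ℕ → Γ) (n m : ℕ) : (boxS e n m).card ≤ (m+1)^(n+1) := by
  refine le_trans (Finset.card_image_le) ?_
  rw [Fintype.card_piFinset]
  simp [Finset.card_range]

omit [AddCommGroup Γ] in
lemma symm_card_bound {A B T : Finset Γ} (hTA : T ⊆ A) (hTB : T ⊆ B) (hAB : A.card = B.card) :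
    (B ∆ A).card ≤ 2 * (A.card - T.card) := by
  have hsub : B ∆ A ⊆ (B \ T) ∪ (A \ T) := by
    intro x hx
    rw [Finset.mem_symmDiff] at hx
    rcases hx with ⟨h1, h2⟩ | ⟨h1, h2⟩
    · exact Finset.mem_union.2 (Or.inl (Finset.mem_sdiff.2 ⟨h1, fun ht => h2 (hTA ht)⟩))
    · exact Finset.mem_union.2 (Or.inr (Finset.mem_sdiff.2 ⟨h1, fun ht => h2 (hTB ht)⟩))
  calc (B ∆ A).card ≤ ((B \ T) ∪ (A \ T)).card := Finset.card_le_card hsub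
    _ ≤ (B \ T).card + (A \ T).card := Finset.card_union_le _ _
    _ = (B.card - T.card) + (A.card - T.card) := by
        rw [Finset.card_sdiff_of_subset hTB, Finset.card_sdiff_of_subset hTA]
    _ ≤ 2 * (A.card - T.card) := by omega

lemma growth_lemma (a : ℕ → ℕ) (d : ℕ) (h1 : ∀ m, 1 ≤ a m)
    (h2 : ∀ m, a m ≤ (m+1)^d) (δ : ℝ) (hδ : 0 < δ) :
    ∃ m, (a (m+1) : ℝ) ≤ (1+δ) * a m := by
  by_contra hc
  push_neg at hc
  have key : ∀ m, (1+δ)^m ≤ (a m : ℝ) := by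
    intro m
    induction m with
    | zero => simpa using (by exact_mod_cast h1 0 : (1:ℝ) ≤ a 0)
    | succ k ih =>
      have := hc k
      calc (1+δ)^(k+1) = (1+δ) * (1+δ)^k := by ring
        _ ≤ (1+δ) * a k := by nlinarith
        _ ≤ a (k+1) := le_of_lt this
  have hlo := isLittleO_pow_const_const_pow_of_one_lt (R := ℝ) d (by linarith : (1:ℝ) < 1+δ)
  have hb := hlo.bound (by positivity : (0:ℝ) < 1/(2*(1+δ)))
  rw [Filter.eventually_atTop] at hb
  obtain ⟨N, hN⟩ := hb
  have hNN := hN (N+1) (by omega)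
  simp only [Real.norm_eq_abs] at hNN
  have hp : (0:ℝ) < (1+δ)^N := by positivity
  rw [abs_of_nonneg (by positivity), abs_of_nonneg (by positivity)] at hNN
  have e1 : 1/(2*(1+δ)) * (1+δ)^(N+1) = (1/2) * (1+δ)^N := by
    field_simp; ring
  rw [e1] at hNN
  have h4 : (a N : ℝ) ≤ ((N:ℝ)+1)^d := by
    have : (a N : ℝ) ≤ ((N+1:ℕ):ℝ)^d := by exact_mod_cast h2 N
    convert this using 2
    push_cast; ring
  have h5 : ((N:ℝ)+1)^d = (((N+1):ℕ):ℝ)^d := by push_cast; ring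
  nlinarith [hNN, h4, key N]

lemma boxS_select (e : ℕ → Γ) (n : ℕ) :
    ∃ m, ∀ j ≤ n, ((((boxS e n m).image (· + e j)) ∆ (boxS e n m)).card : ℝ) * (n+1)
      ≤ (boxS e n m).card := by
  set a : ℕ → ℕ := fun m => (boxS e n m).card with ha
  have h1 : ∀ m, 1 ≤ a m := fun m => Finset.card_pos.2 (boxS_nonempty e n m)
  have h2 : ∀ m, a m ≤ (m+1)^(n+1) := fun m => boxS_card_le e n m
  have hδ : (0:ℝ) < 1/(2*((n:ℝ)+1)) := by positivity
  obtain ⟨m, hm⟩ := growth_lemma a (n+1) h1 h2 _ hδ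
  refine ⟨m+1, fun j hj => ?_⟩
  set A := boxS e n (m+1) with hA
  set B := A.image (· + e j) with hB
  set T := (boxS e n m).image (· + e j) with hT
  have hTA : T ⊆ A := by
    intro x hx
    obtain ⟨y, hy, rfl⟩ := Finset.mem_image.1 hx
    exact add_mem_boxS e hj hy
  have hTB : T ⊆ B := Finset.image_subset_image (boxS_mono e n (Nat.le_succ m))
  have hinj : Function.Injective (· + e j) := add_left_injective (e j)
  have hAB : A.card = B.card := (Finset.card_image_of_injective _ hinj).symm
  have hTc : T.card = a m := Finset.card_image_of_injective _ hinj
  have hle : a m ≤ a (m+1) := Finset.card_le_card (boxS_mono e n (Nat.le_succ m))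
  have hnat : (B ∆ A).card ≤ 2 * (a (m+1) - a m) := by
    have := symm_card_bound hTA hTB hAB
    rwa [hTc] at this
  have hreal : ((B ∆ A).card : ℝ) ≤ 2 * ((a (m+1) : ℝ) - a m) := by
    have := (Nat.cast_le (α := ℝ)).2 hnat
    push_cast [Nat.cast_sub hle] at this
    linarith
  have hm' : (a (m+1) : ℝ) - a m ≤ (1/(2*((n:ℝ)+1))) * a m := by linarith
  have hamle : (a m : ℝ) ≤ a (m+1) := by exact_mod_cast hle
  have hpos : (0:ℝ) < (n:ℝ)+1 := by positivity
  calc ((B ∆ A).card : ℝ) * ((n:ℝ)+1) ≤ (2 * ((1/(2*((n:ℝ)+1))) * a m)) * ((n:ℝ)+1) := by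
        nlinarith
    _ = (a m : ℝ) := by field_simp
    _ ≤ (a (m+1) : ℝ) := hamle

/-- Every countable abelian group admits a Følner sequence. -/
lemma exists_folner [Countable Γ] :
    ∃ F : ℕ → Finset Γ, (∀ n, (F n).Nonempty) ∧
      (∀ γ : Γ, Tendsto
        (fun n => ((((F n).image (· + γ)) ∆ (F n)).card : ℝ) / ((F n).card : ℝ))
        atTop (𝓝 0)) := by
  have : Nonempty Γ := ⟨0⟩
  obtain ⟨e, he⟩ := exists_surjective_nat Γ
  choose m hm using fun n => boxS_select e n
  refine ⟨fun n => boxS e n (m n), fun n => boxS_nonempty e n (m n), fun γ => ?_⟩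
  obtain ⟨j, rfl⟩ := he γ
  have hbound : ∀ n ≥ j,
      ((((boxS e n (m n)).image (· + e j)) ∆ (boxS e n (m n))).card : ℝ)
        / ((boxS e n (m n)).card : ℝ) ≤ 1 / (n+1) := by
    intro n hn
    have hcpos : (0:ℝ) < ((boxS e n (m n)).card : ℝ) := by
      exact_mod_cast Finset.card_pos.2 (boxS_nonempty e n (m n))
    have := hm n j hn
    rw [div_le_div_iff₀ hcpos (by positivity)]
    linarith
  refine tendsto_of_tendsto_of_tendsto_of_le_of_le' tendsto_const_nhds
    tendsto_one_div_add_atTop_nhds_zero_nat ?_ ?_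
  · exact Filter.Eventually.of_forall (fun n => by positivity)
  · exact Filter.eventually_atTop.2 ⟨j, hbound⟩

end FolnerAux

/-- Syndeticity from positive lower averages in a countable abelian group: if `f : Γ → [0, M]` has
positive liminf of averages along every Følner sequence, then `{γ : f(γ) ≥ c}` is syndetic for
some `c > 0`. -/
theorem stmt13 {Γ : Type*} [AddCommGroup Γ] [Countable Γ] [DecidableEq Γ]
    (f : Γ → ℝ) (M : ℝ) (hf : ∀ γ, f γ ∈ Set.Icc 0 M)
    (h : ∀ F : ℕ → Finset Γ, (∀ n, (F n).Nonempty) →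
      (∀ γ : Γ, Tendsto
        (fun n => ((((F n).image (· + γ)) ∆ (F n)).card : ℝ) / ((F n).card : ℝ))
        atTop (𝓝 0)) →
      0 < liminf (fun n => (∑ γ ∈ F n, f γ) / ((F n).card : ℝ)) atTop) :
    ∃ c > 0, ∃ K : Finset Γ, ∀ x : Γ, ∃ s, c ≤ f s ∧ ∃ k ∈ K, x = s + k := by
  by_contra hcon
  push_neg at hcon
  obtain ⟨F, hF1, hF2⟩ := exists_folner (Γ := Γ)
  choose x hx using fun n : ℕ =>
    hcon (1/((n:ℝ)+1)) (by positivity) (F n)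
  set G : ℕ → Finset Γ := fun n => (F n).image (fun k => x n - k) with hG
  have hinj : ∀ n : ℕ, Function.Injective (fun k => x n - k) := fun n => sub_right_injective
  have hG1 : ∀ n, (G n).Nonempty := fun n => (hF1 n).image _
  have hGf : ∀ n, ∀ y ∈ G n, f y ≤ 1/((n:ℝ)+1) := by
    intro n y hy
    obtain ⟨k, hk, rfl⟩ := Finset.mem_image.1 hy
    by_contra hlt
    push_neg at hlt
    exact hx n (x n - k) hlt.le k hk (by abel)
  have hcard : ∀ n, (G n).card = (F n).card := fun n =>
    Finset.card_image_of_injective _ (hinj n)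
  have hG2 : ∀ γ : Γ, Tendsto
      (fun n => ((((G n).image (· + γ)) ∆ (G n)).card : ℝ) / ((G n).card : ℝ))
      atTop (𝓝 0) := by
    intro γ
    have key : ∀ n, (((G n).image (· + γ)) ∆ (G n)).card
        = (((F n).image (· + (-γ))) ∆ (F n)).card := by
      intro n
      have h1 : ((((G n).image (· + γ)) ∆ (G n)).image (fun y => x n - y)).card
          = (((G n).image (· + γ)) ∆ (G n)).card :=
        Finset.card_image_of_injective _ (hinj n)
      rw [← h1, Finset.image_symmDiff _ _ (hinj n), hG]
      simp only [Finset.image_image]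
      have e1 : Finset.image ((fun k => x n - k) ∘ (fun y => y + γ) ∘ fun k => x n - k) (F n)
          = Finset.image (fun y => y + -γ) (F n) :=
        Finset.image_congr (fun k _ => by
          show x n - (x n - k + γ) = k + -γ; abel)
      have e2 : Finset.image ((fun k => x n - k) ∘ fun k => x n - k) (F n)
          = Finset.image id (F n) :=
        Finset.image_congr (fun k _ => by show x n - (x n - k) = k; abel)
      rw [e1, e2, Finset.image_id]
    have : (fun n => ((((G n).image (· + γ)) ∆ (G n)).card : ℝ) / ((G n).card : ℝ))
        = (fun n => ((((F n).image (· + (-γ))) ∆ (F n)).card : ℝ) / ((F n).card : ℝ)) := by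
      funext n; rw [key n, hcard n]
    rw [this]
    exact hF2 (-γ)
  have hpos := h G hG1 hG2
  have htend : Tendsto (fun n => (∑ γ ∈ G n, f γ) / ((G n).card : ℝ)) atTop (𝓝 0) := by
    refine tendsto_of_tendsto_of_tendsto_of_le_of_le' tendsto_const_nhds
      tendsto_one_div_add_atTop_nhds_zero_nat ?_ ?_
    · refine Filter.Eventually.of_forall (fun n => ?_)
      apply div_nonneg
      · exact Finset.sum_nonneg (fun γ _ => (hf γ).1)
      · positivity
    · refine Filter.Eventually.of_forall (fun n => ?_)
      have hcpos : (0:ℝ) < ((G n).card : ℝ) := by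
        exact_mod_cast Finset.card_pos.2 (hG1 n)
      rw [div_le_iff₀ hcpos]
      calc ∑ γ ∈ G n, f γ ≤ (G n).card • (1/((n:ℝ)+1)) :=
            Finset.sum_le_card_nsmul _ _ _ (hGf n)
        _ = 1/((n:ℝ)+1) * ((G n).card : ℝ) := by
            rw [nsmul_eq_mul]; ring
  rw [htend.liminf_eq] at hpos
  exact lt_irrefl 0 hpos
end

section
/- Let p be a prime and Λ_p = {γ ∈ ℤ[1/p] : |γ|_∞ ≤ 1} ⊆ ℚ_p, where |·|_∞ is the real absolute value of γ viewed in ℝ. Then Λ_p is symmetric, multiplicatively closed, uniformly discrete and relatively dense in ℚ_p, and Λ_p + Λ_p ⊆ Λ_p + {−1, 0, 1}; in particular Λ_p is an approximate lattice in ℚ_p whose additive span is ℤ[1/p]. -/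
/-!
Everything happens inside `ℤ[1/p] ⊆ ℚ`, transported to `ℚ_p` by the embedding `ℚ → ℚ_p`.
Symmetry, multiplicative closure and `Λ + Λ ⊆ Λ + {-1, 0, 1}` are statements about real absolute
values only. Uniform discreteness is a product formula: `|q|_∞ · |q|_p ≥ 1` for every nonzero
`q ∈ ℤ[1/p]`, so a nonzero difference of two points of `Λ_p`, having `|·|_∞ ≤ 2`, has `|·|_p ≥ 1/2`.
For relative density, write `p ^ n x ∈ ℤ_p` as `a + p ^ n z` with `0 ≤ a < p ^ n` and `z ∈ ℤ_p`;
then `x = a / p ^ n + z` with `a / p ^ n ∈ Λ_p`.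
-/

open scoped Pointwise
open Set

section IntAdjoinInv

variable (n : ℕ) [NeZero n]

def intAdjoinInv : Subring ℚ where
  carrier := {q | ∃ (a : ℤ) (k : ℕ), q = a / (n : ℚ) ^ k}
  mul_mem' := by
    rintro _ _ ⟨a, k, rfl⟩ ⟨b, m, rfl⟩
    exact ⟨a * b, k + m, by push_cast; ring⟩
  one_mem' := ⟨1, 0, by simp⟩
  add_mem' := by
    rintro _ _ ⟨a, k, rfl⟩ ⟨b, m, rfl⟩
    have : (n : ℚ) ≠ 0 := NeZero.ne _
    exact ⟨a * n ^ m + b * n ^ k, k + m, by field_simp; push_cast; ring⟩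
  zero_mem' := ⟨0, 0, by simp⟩
  neg_mem' := by
    rintro _ ⟨a, k, rfl⟩
    exact ⟨-a, k, by push_cast; ring⟩

def intAdjoinInvBall : Set ℚ := {q | q ∈ intAdjoinInv n ∧ |q| ≤ 1}

theorem neg_intAdjoinInvBall : -intAdjoinInvBall n = intAdjoinInvBall n := by
  ext q
  simp [intAdjoinInvBall, neg_mem_iff]

theorem intAdjoinInvBall_mul_subset :
    intAdjoinInvBall n * intAdjoinInvBall n ⊆ intAdjoinInvBall n := by
  rintro _ ⟨x, ⟨hx, hx1⟩, y, ⟨hy, hy1⟩, rfl⟩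
  exact ⟨mul_mem hx hy, by rw [abs_mul]; exact mul_le_one₀ hx1 (abs_nonneg y) hy1⟩

theorem intAdjoinInvBall_add_subset :
    intAdjoinInvBall n + intAdjoinInvBall n ⊆ intAdjoinInvBall n + {-1, 0, 1} := by
  rintro _ ⟨x, ⟨hx, hx1⟩, y, ⟨hy, hy1⟩, rfl⟩
  have hxy := add_mem hx hy
  obtain ⟨hx1, hx1'⟩ := abs_le.1 hx1
  obtain ⟨hy1, hy1'⟩ := abs_le.1 hy1
  rcases lt_or_ge 1 (x + y) with h | h
  · exact ⟨x + y - 1, ⟨sub_mem hxy (one_mem _), abs_le.2 ⟨by linarith, by linarith⟩⟩,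
      1, by simp, by ring⟩
  rcases lt_or_ge (x + y) (-1) with h' | h'
  · exact ⟨x + y + 1, ⟨add_mem hxy (one_mem _), abs_le.2 ⟨by linarith, by linarith⟩⟩,
      -1, by simp, by ring⟩
  · exact ⟨x + y, ⟨hxy, abs_le.2 ⟨h', h⟩⟩, 0, by simp, add_zero _⟩

theorem one_div_pow_mem_intAdjoinInvBall (k : ℕ) : 1 / (n : ℚ) ^ k ∈ intAdjoinInvBall n := by
  have hn : (1 : ℚ) ≤ n := by exact_mod_cast Nat.one_le_iff_ne_zero.2 (NeZero.ne n)
  refine ⟨⟨1, k, by simp⟩, ?_⟩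
  rw [abs_of_nonneg (by positivity), div_le_one (by positivity)]
  exact one_le_pow₀ hn

theorem closure_intAdjoinInvBall :
    AddSubgroup.closure (intAdjoinInvBall n) = (intAdjoinInv n).toAddSubgroup := by
  refine le_antisymm ((AddSubgroup.closure_le _).2 fun q hq ↦ hq.1) ?_
  rintro _ ⟨a, k, rfl⟩
  have := AddSubgroup.zsmul_mem _
    (AddSubgroup.subset_closure (one_div_pow_mem_intAdjoinInvBall n k)) a
  rwa [zsmul_eq_mul, mul_one_div] at this

variable (F : Type*) [DivisionRing F] [CharZero F]

theorem image_intAdjoinInv :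
    Rat.castHom F '' intAdjoinInv n = {x | ∃ (a : ℤ) (k : ℕ), x = a / (n : F) ^ k} := by
  ext x
  constructor
  · rintro ⟨_, ⟨a, k, rfl⟩, rfl⟩
    exact ⟨a, k, by simp⟩
  · rintro ⟨a, k, rfl⟩
    exact ⟨a / n ^ k, ⟨a, k, rfl⟩, by simp⟩

theorem image_intAdjoinInvBall :
    Rat.castHom F '' intAdjoinInvBall n =
      {x | ∃ (a : ℤ) (k : ℕ), x = a / (n : F) ^ k ∧ |(a : ℝ) / (n : ℝ) ^ k| ≤ 1} := by
  ext x
  constructor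
  · rintro ⟨_, ⟨⟨a, k, rfl⟩, hq⟩, rfl⟩
    exact ⟨a, k, by simp, by exact_mod_cast hq⟩
  · rintro ⟨a, k, rfl, hq⟩
    exact ⟨a / n ^ k, ⟨⟨a, k, rfl⟩, by exact_mod_cast hq⟩, by simp⟩

theorem closure_image_intAdjoinInvBall :
    (AddSubgroup.closure (Rat.castHom F '' intAdjoinInvBall n) : Set F) =
      Rat.castHom F '' intAdjoinInv n := by
  change (AddSubgroup.closure ((Rat.castHom F).toAddMonoidHom '' _) : Set F) =
    (Rat.castHom F).toAddMonoidHom '' _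
  rw [← AddMonoidHom.map_closure, closure_intAdjoinInvBall, AddSubgroup.coe_map]
  rfl

end IntAdjoinInv

section Padic

variable (p : ℕ) [hp : Fact p.Prime]

theorem one_le_abs_mul_padicNorm_intCast {a : ℤ} (ha : a ≠ 0) :
    1 ≤ |(a : ℚ)| * padicNorm p a := by
  have hpow : ((p ^ padicValInt p a : ℕ) : ℚ) ≤ |(a : ℚ)| := by
    have := Int.le_of_dvd (abs_pos.2 ha) ((dvd_abs _ _).2 (padicValInt_dvd (p := p) a))
    exact_mod_cast this
  rw [padicNorm.eq_zpow_of_nonzero (by exact_mod_cast ha), padicValRat.of_int, zpow_neg,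
    zpow_natCast, ← div_eq_mul_inv, one_le_div (by have := hp.out.pos; positivity)]
  exact_mod_cast hpow

theorem one_le_abs_mul_padicNorm {q : ℚ} (hq : q ∈ intAdjoinInv p) (hq0 : q ≠ 0) :
    1 ≤ |q| * padicNorm p q := by
  obtain ⟨a, k, rfl⟩ := hq
  have ha : a ≠ 0 := by rintro rfl; simp at hq0
  have hp0 : (p : ℚ) ≠ 0 := NeZero.ne _
  calc 1 ≤ |(a : ℚ)| * padicNorm p a := one_le_abs_mul_padicNorm_intCast p ha
    _ = |(a : ℚ) / p ^ k| * padicNorm p (a / p ^ k) := by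
      rw [abs_div, padicNorm.div, IsAbsoluteValue.abv_pow (padicNorm p),
        padicNorm.padicNorm_p_of_prime, abs_pow, Nat.abs_cast, inv_pow, div_inv_eq_mul]
      field_simp

theorem eq_zero_of_mem_sub_of_padicNorm_lt {q : ℚ}
    (hq : q ∈ intAdjoinInvBall p - intAdjoinInvBall p) (hpq : padicNorm p q < 2⁻¹) : q = 0 := by
  obtain ⟨x, ⟨hx, hx1⟩, y, ⟨hy, hy1⟩, rfl⟩ := hq
  by_contra hne
  have h2 : |x - y| ≤ 2 := (abs_sub x y).trans (by linarith)
  have := one_le_abs_mul_padicNorm p (sub_mem hx hy) hne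
  nlinarith [padicNorm.nonneg (p := p) (x - y)]

theorem exists_mem_intAdjoinInvBall_norm_sub_le_one (x : ℚ_[p]) :
    ∃ q ∈ intAdjoinInvBall p, ‖x - q‖ ≤ 1 := by
  have hp1 : (1 : ℝ) < p := by exact_mod_cast hp.out.one_lt
  obtain ⟨n, hn⟩ := pow_unbounded_of_one_lt ‖x‖ hp1
  have hy : ‖(p : ℚ_[p]) ^ n * x‖ ≤ 1 := by
    rw [norm_mul, norm_pow, Padic.norm_p, inv_pow, inv_mul_le_one₀ (by positivity)]
    exact hn.le
  obtain ⟨y, hyx⟩ : ∃ y : ℤ_[p], (y : ℚ_[p]) = p ^ n * x := ⟨⟨_, hy⟩, rfl⟩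
  have hdist := ((y - y.appr n).norm_le_pow_iff_mem_span_pow n).2 (y.appr_spec n)
  refine ⟨(y.appr n : ℚ) / p ^ n, ⟨⟨y.appr n, n, by push_cast; rfl⟩, ?_⟩, ?_⟩
  · rw [abs_of_nonneg (by positivity), div_le_one (by have := hp.out.pos; positivity)]
    exact_mod_cast (y.appr_lt n).le
  · have hp0 : (p : ℚ_[p]) ≠ 0 := NeZero.ne _
    have hx : x - ((y.appr n / p ^ n : ℚ) : ℚ_[p]) =
        ((y - y.appr n : ℤ_[p]) : ℚ_[p]) / p ^ n := by
      push_cast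
      rw [hyx]
      field_simp
    rw [hx, norm_div, norm_pow, Padic.norm_p, ← PadicInt.norm_def, inv_pow, div_inv_eq_mul]
    calc _ ≤ (p : ℝ) ^ (-n : ℤ) * p ^ n := by gcongr
      _ = 1 := by rw [zpow_neg, zpow_natCast, inv_mul_cancel₀ (by positivity)]

theorem image_sub_intAdjoinInvBall_inter_ball :
    Rat.castHom ℚ_[p] '' (intAdjoinInvBall p - intAdjoinInvBall p) ∩ Metric.ball 0 2⁻¹ =
      {0} := by
  ext x
  constructor
  · rintro ⟨⟨q, hq, rfl⟩, hx⟩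
    rw [mem_ball_zero_iff, Rat.coe_castHom, Padic.eq_padicNorm] at hx
    simp [eq_zero_of_mem_sub_of_padicNorm_lt p hq
      (by rw [← Rat.cast_lt (K := ℝ)]; simpa using hx)]
  · rintro rfl
    have h0 : (0 : ℚ) ∈ intAdjoinInvBall p := ⟨zero_mem _, by simp⟩
    exact ⟨⟨0, ⟨0, h0, 0, h0, sub_zero 0⟩, map_zero _⟩, by simp⟩

theorem image_intAdjoinInvBall_add_closedBall :
    Rat.castHom ℚ_[p] '' intAdjoinInvBall p + Metric.closedBall 0 1 = univ := by
  refine eq_univ_of_forall fun x ↦ ?_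
  obtain ⟨q, hq, hxq⟩ := exists_mem_intAdjoinInvBall_norm_sub_le_one p x
  exact ⟨q, ⟨q, hq, rfl⟩, x - q, mem_closedBall_zero_iff.2 hxq, add_sub_cancel _ _⟩

end Padic

/-- For a prime `p`, the set `Λ_p = {γ ∈ ℤ[1/p] : |γ|_∞ ≤ 1} ⊆ ℚ_p` is symmetric,
multiplicatively closed, uniformly discrete and relatively dense in `ℚ_p`, satisfies
`Λ_p + Λ_p ⊆ Λ_p + {-1, 0, 1}` (so it is an approximate lattice), and its additive span is
`ℤ[1/p]`. -/
theorem stmt18 (p : ℕ) [Fact p.Prime] :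
    let Λ : Set ℚ_[p] := {x | ∃ (a : ℤ) (k : ℕ),
      x = (a : ℚ_[p]) / (p : ℚ_[p]) ^ k ∧ |(a : ℝ) / (p : ℝ) ^ k| ≤ 1}
    (-Λ = Λ) ∧ (Λ * Λ ⊆ Λ) ∧
      (∃ U : Set ℚ_[p], IsOpen U ∧ (0 : ℚ_[p]) ∈ U ∧ (Λ - Λ) ∩ U = {0}) ∧
      (∃ Q : Set ℚ_[p], IsCompact Q ∧ Λ + Q = Set.univ) ∧
      (Λ + Λ ⊆ Λ + ({-1, 0, 1} : Set ℚ_[p])) ∧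
      (AddSubgroup.closure Λ : Set ℚ_[p]) =
        {x | ∃ (a : ℤ) (k : ℕ), x = (a : ℚ_[p]) / (p : ℚ_[p]) ^ k} := by
  intro Λ
  rw [show Λ = _ from (image_intAdjoinInvBall p ℚ_[p]).symm, ← image_intAdjoinInv p ℚ_[p],
    closure_image_intAdjoinInvBall, ← Set.image_neg, neg_intAdjoinInvBall, ← Set.image_mul,
    ← Set.image_sub, ← Set.image_add]
  refine ⟨rfl, image_mono (intAdjoinInvBall_mul_subset p),
    ⟨_, Metric.isOpen_ball, by simp, image_sub_intAdjoinInvBall_inter_ball p⟩,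
    ⟨_, isCompact_closedBall 0 1, image_intAdjoinInvBall_add_closedBall p⟩, ?_, rfl⟩
  calc _ ⊆ Rat.castHom ℚ_[p] '' (intAdjoinInvBall p + {-1, 0, 1}) :=
        image_mono (intAdjoinInvBall_add_subset p)
    _ = _ := by rw [Set.image_add, Set.image_insert_eq, Set.image_insert_eq]; simp
end

section
/- Let G be a locally compact second countable abelian group, P₀ ⊆ G a U-uniformly discrete set, and V ⊆ G a non-empty open m_G-Jordan measurable set with closure(V) − closure(V) ⊆ U. Then for every G-invariant Borel probability measure μ on the hull Ω_{P₀}, the open set O_V = {P ∈ Ω_{P₀} : P ∩ V ≠ ∅} is μ-Jordan measurable, i.e. μ(interior of O_V) = μ(closure of O_V). -/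
open scoped Pointwise
open Set MeasureTheory

/-- The Chabauty–Fell topology on the space of subsets of `G`, generated by the sets
`{A : A ∩ U ≠ ∅}` for `U` open and `{A : A ∩ K = ∅}` for `K` compact. -/
def chabautyTop (G : Type*) [TopologicalSpace G] : TopologicalSpace (Set G) :=
  TopologicalSpace.generateFrom
    ({S | ∃ U : Set G, IsOpen U ∧ S = {A : Set G | (A ∩ U).Nonempty}} ∪
     {S | ∃ K : Set G, IsCompact K ∧ S = {A : Set G | A ∩ K = ∅}})

/-- The Borel σ-algebra of the Chabauty topology. -/
noncomputable def chabautyBorel (G : Type*) [TopologicalSpace G] : MeasurableSpace (Set G) :=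
  @borel (Set G) (chabautyTop G)

/-!
The relative boundary of `O_V` in the hull `Ω` consists of sets meeting the compact Haar-null
set `D = closure V \ V`, so it suffices to show `μ {A ∈ Ω | A ∩ D ≠ ∅} = 0`. Apply Fubini to
`{(g, A) | A ∈ Ω, (A + g) ∩ D ≠ ∅}` for Haar measure ⊗ `μ`. Every `A ∈ Ω` is uniformly discrete,
hence closed and countable, so its slice `⋃_{x ∈ A} (D - x)` is Haar-null; by invariance of `μ`
every slice over `g ∈ G` has measure `μ {A ∈ Ω | A ∩ D ≠ ∅}`, which therefore vanishes.
-/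

open Filter Topology TopologicalSpace

section Chabauty

variable {G : Type*} [TopologicalSpace G]

attribute [local instance] chabautyTop

theorem chabauty_isOpen_setOf_inter_nonempty {W : Set G} (hW : IsOpen W) :
    IsOpen {A : Set G | (A ∩ W).Nonempty} :=
  isOpen_generateFrom_of_mem (Or.inl ⟨W, hW, rfl⟩)

theorem chabauty_isClosed_setOf_inter_nonempty {K : Set G} (hK : IsCompact K) :
    IsClosed {A : Set G | (A ∩ K).Nonempty} := by
  have hmiss : IsOpen {A : Set G | A ∩ K = ∅} :=
    isOpen_generateFrom_of_mem (Or.inr ⟨K, hK, rfl⟩)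
  simpa [← isOpen_compl_iff, compl_ofPred, Set.not_nonempty_iff_eq_empty] using hmiss

theorem chabauty_closure_inter_subset {V : Set G} (hV : IsCompact (closure V)) {Ω : Set (Set G)}
    (hΩ : IsClosed Ω) :
    closure ({A : Set G | (A ∩ V).Nonempty} ∩ Ω) ⊆
      ({A : Set G | (A ∩ V).Nonempty} ∩ Ω) ∪ {A ∈ Ω | (A ∩ (closure V \ V)).Nonempty} := by
  intro A hA
  have hAΩ : A ∈ Ω := closure_minimal inter_subset_right hΩ hA
  obtain ⟨x, hxA, hxV⟩ : (A ∩ closure V).Nonempty :=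
    closure_minimal (fun B hB => hB.1.mono (inter_subset_inter_right _ subset_closure))
      (chabauty_isClosed_setOf_inter_nonempty hV) hA
  by_cases hx : x ∈ V
  · exact Or.inl ⟨⟨x, hxA, hx⟩, hAΩ⟩
  · exact Or.inr ⟨hAΩ, x, hxA, hxV, hx⟩

variable [AddCommGroup G] [IsTopologicalAddGroup G]

theorem chabauty_continuous_sub_singleton (g : G) :
    Continuous fun A : Set G => A - {g} := by
  refine continuous_generateFrom_iff.2 ?_
  rintro S (⟨W, hW, rfl⟩ | ⟨K, hK, rfl⟩) <;> simp only [Set.sub_singleton, preimage_ofPred_eq]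
  · simpa only [image_inter_nonempty_iff] using
      chabauty_isOpen_setOf_inter_nonempty (hW.preimage (continuous_sub_right g))
  · have hK' : IsCompact ((· - g) ⁻¹' K) := (Homeomorph.subRight g).isCompact_preimage.2 hK
    simpa only [← not_nonempty_iff_eq_empty, image_inter_nonempty_iff, ← isOpen_compl_iff,
      compl_ofPred, not_not] using (chabauty_isClosed_setOf_inter_nonempty hK').isOpen_compl

def hull (P₀ : Set G) : Set (Set G) :=
  closure (range fun g : G => P₀ - {g})

theorem sub_singleton_mem_hull {P₀ A : Set G} (hA : A ∈ hull P₀) (g : G) : A - {g} ∈ hull P₀ :=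
  map_mem_closure (f := fun B => B - {g}) (chabauty_continuous_sub_singleton g) hA <| by
    rintro _ ⟨h, rfl⟩
    exact ⟨h + g, show P₀ - {h + g} = P₀ - {h} - {g} by rw [sub_sub, singleton_add_singleton]⟩

theorem preimage_sub_singleton_hull (P₀ : Set G) (g : G) :
    (fun A : Set G => A - {g}) ⁻¹' hull P₀ = hull P₀ := by
  ext A
  refine ⟨fun hA => ?_, fun hA => sub_singleton_mem_hull hA g⟩
  simpa only [sub_sub, singleton_add_singleton, add_neg_cancel, singleton_zero, sub_zero] using
    sub_singleton_mem_hull hA (-g)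

end Chabauty

section UniformlyDiscrete

variable {G : Type*} [AddCommGroup G]

def IsUniformlyDiscrete (U A : Set G) : Prop :=
  ∀ a ∈ A, ∀ b ∈ A, a - b ∈ U → a = b

variable {U A : Set G}

theorem isUniformlyDiscrete_of_sub_inter_subset (h : (A - A) ∩ U ⊆ {0}) :
    IsUniformlyDiscrete U A :=
  fun _ ha _ hb hab => sub_eq_zero.1 (h ⟨sub_mem_sub ha hb, hab⟩)

theorem IsUniformlyDiscrete.sub_singleton (hA : IsUniformlyDiscrete U A) (g : G) :
    IsUniformlyDiscrete U (A - {g}) := by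
  rw [Set.sub_singleton]
  rintro _ ⟨a, ha, rfl⟩ _ ⟨b, hb, rfl⟩ hab
  rw [hA a ha b hb (by rwa [sub_sub_sub_cancel_right] at hab)]

variable [TopologicalSpace G] [IsTopologicalAddGroup G]

theorem IsUniformlyDiscrete.locallyFinite (hA : IsUniformlyDiscrete U A) (hU : U ∈ 𝓝 0) :
    LocallyFinite fun a : A => ({(a : G)} : Set G) := by
  intro x
  obtain ⟨N, hN, hNU⟩ := exists_nhds_half_neg hU
  refine ⟨(· - x) ⁻¹' N,
    (continuous_sub_right x).continuousAt.preimage_mem_nhds (by simpa using hN), ?_⟩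
  refine Set.Subsingleton.finite ?_
  rintro ⟨a, ha⟩ ⟨_, hya, hax⟩ ⟨b, hb⟩ ⟨_, hzb, hbx⟩
  rw [mem_singleton_iff.1 hya] at hax
  rw [mem_singleton_iff.1 hzb] at hbx
  exact Subtype.ext (hA a ha b hb (by simpa using hNU _ hax _ hbx))

theorem IsUniformlyDiscrete.isClosed [T1Space G] (hA : IsUniformlyDiscrete U A) (hU : U ∈ 𝓝 0) :
    IsClosed A := by
  simpa using (hA.locallyFinite hU).isClosed_iUnion fun _ => isClosed_singleton

theorem IsUniformlyDiscrete.countable [SigmaCompactSpace G] (hA : IsUniformlyDiscrete U A)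
    (hU : U ∈ 𝓝 0) : A.Countable :=
  Set.countable_coe_iff.1 <| countable_univ_iff.1 <|
    (hA.locallyFinite hU).countable_univ fun _ => singleton_nonempty _

theorem IsUniformlyDiscrete.t1Space (hA : IsUniformlyDiscrete U A) (hU : U ∈ 𝓝 0)
    (hAc : IsClosed A) (hne : A.Nonempty) : T1Space G := by
  refine IsTopologicalAddGroup.t1Space _ (closure_subset_iff_isClosed.1 fun x hx => ?_)
  obtain ⟨a, ha⟩ := hne
  have hax : a + x ∈ A := hAc.closure_subset_iff.2 (singleton_subset_iff.2 ha) <|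
    map_mem_closure (continuous_const_add a) hx fun y hy => by simp_all
  -- in a topological group, `x ∈ closure {0}` makes `x` and `0` inseparable
  have hxU : x ∈ U := mem_of_mem_nhds ((specializes_iff_mem_closure.2 hx).symm hU)
  simpa using hA _ hax _ ha (by simpa using hxU)

attribute [local instance] chabautyTop

theorem chabauty_isClosed_setOf_isUniformlyDiscrete [T1Space G] (hU : IsOpen U) :
    IsClosed {A : Set G | IsUniformlyDiscrete U A} := by
  refine isOpen_compl_iff.1 (isOpen_iff_forall_mem_open.2 fun A hA => ?_)
  simp only [mem_compl_iff, mem_ofPred_eq, IsUniformlyDiscrete, not_forall] at hA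
  obtain ⟨a, ha, b, hb, hab, hne⟩ := hA
  obtain ⟨W₁, W₂, hW₁, hW₂, haW, hbW, hW⟩ := isOpen_prod_iff.1
    ((hU.inter isOpen_compl_singleton).preimage continuous_sub) a b
    (show a - b ∈ U ∩ {0}ᶜ from ⟨hab, sub_ne_zero.2 hne⟩)
  refine ⟨{B | (B ∩ W₁).Nonempty} ∩ {B | (B ∩ W₂).Nonempty}, ?_,
    (chabauty_isOpen_setOf_inter_nonempty hW₁).inter (chabauty_isOpen_setOf_inter_nonempty hW₂),
    ⟨a, ha, haW⟩, ⟨b, hb, hbW⟩⟩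
  rintro B ⟨⟨x, hxB, hx⟩, ⟨y, hyB, hy⟩⟩ hB
  have hxy : x - y ∈ U ∩ {0}ᶜ := hW (mk_mem_prod hx hy)
  exact hxy.2 (sub_eq_zero.2 (hB x hxB y hyB hxy.1))

theorem IsUniformlyDiscrete.of_mem_hull [T1Space G] (hU : IsOpen U) {P₀ : Set G}
    (hP₀ : IsUniformlyDiscrete U P₀) (hA : A ∈ hull P₀) : IsUniformlyDiscrete U A :=
  closure_minimal (by rintro _ ⟨g, rfl⟩; exact hP₀.sub_singleton g)
    (chabauty_isClosed_setOf_isUniformlyDiscrete hU) hA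

end UniformlyDiscrete

theorem inter_nonempty_iff_forall_inter_thickening_nonempty {X : Type*} [PseudoMetricSpace X]
    {B D : Set X} (hB : IsClosed B) (hD : IsCompact D) :
    (B ∩ D).Nonempty ↔ ∀ n : ℕ, (B ∩ Metric.thickening (1 / ((n : ℝ) + 1)) D).Nonempty := by
  refine ⟨fun h n => h.mono (inter_subset_inter_right _
    (Metric.self_subset_thickening (by positivity) D)), fun h => ?_⟩
  by_contra hBD
  obtain ⟨δ, hδ, hδD⟩ := hD.exists_thickening_subset_open hB.isOpen_compl
    fun x hxD hxB => hBD ⟨x, hxB, hxD⟩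
  obtain ⟨n, hn⟩ := exists_nat_one_div_lt hδ
  obtain ⟨x, hxB, hxD⟩ := h n
  exact hδD (Metric.thickening_mono hn.le D hxD) hxB

theorem isCompact_of_sub_subset {G : Type*} [AddCommGroup G] [TopologicalSpace G]
    [IsTopologicalAddGroup G] {s K : Set G} (hK : IsCompact K) (hs : IsClosed s)
    (h : s - s ⊆ K) : IsCompact s := by
  rcases s.eq_empty_or_nonempty with rfl | ⟨v, hv⟩
  · exact isCompact_empty
  · exact (hK.image (continuous_add_const v)).of_isClosed_subset hs
      fun x hx => ⟨x - v, h (sub_mem_sub hx hv), sub_add_cancel x v⟩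

section Measure

variable {G : Type*} [AddCommGroup G] [TopologicalSpace G] [IsTopologicalAddGroup G]
  [SecondCountableTopology G] [MeasurableSpace G]

attribute [local instance] chabautyTop chabautyBorel

local instance : BorelSpace (Set G) := ⟨rfl⟩

/- The product of `G` with the Chabauty topology need not be second countable, so open sets of
`G × Set G` are not automatically measurable for the product σ-algebra: we exhibit the set as a
countable union of measurable rectangles. -/
theorem measurableSet_setOf_exists_add_mem [OpensMeasurableSpace G] {W : Set G}
    (hW : IsOpen W) :
    MeasurableSet {p : G × Set G | ∃ x ∈ p.2, x + p.1 ∈ W} := by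
  have hbasis := isBasis_countableBasis G
  have hrect : {p : G × Set G | ∃ x ∈ p.2, x + p.1 ∈ W} =
      ⋃ b ∈ countableBasis G, ⋃ c ∈ countableBasis G, ⋃ (_ : b + c ⊆ W),
        c ×ˢ {A : Set G | (A ∩ b).Nonempty} := by
    ext ⟨g, A⟩
    simp only [mem_ofPred_eq, mem_iUnion, mem_prod, exists_prop]
    constructor
    · rintro ⟨x, hxA, hxW⟩
      obtain ⟨Wx, Wg, hWx, hWg, hx, hg, hsub⟩ :=
        isOpen_prod_iff.1 (hW.preimage continuous_add) x g hxW
      obtain ⟨b, hb, hxb, hbW⟩ := hbasis.exists_subset_of_mem_open hx hWx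
      obtain ⟨c, hc, hgc, hcW⟩ := hbasis.exists_subset_of_mem_open hg hWg
      refine ⟨b, hb, c, hc, ?_, hgc, x, hxA, hxb⟩
      exact add_subset_iff.2 fun y hy z hz => hsub (mk_mem_prod (hbW hy) (hcW hz))
    · rintro ⟨b, -, c, -, hbc, hgc, x, hxA, hxb⟩
      exact ⟨x, hxA, hbc (add_mem_add hxb hgc)⟩
  rw [hrect]
  refine .biUnion (countable_countableBasis G) fun b hb =>
    .biUnion (countable_countableBasis G) fun c hc => .iUnion fun _ => ?_
  exact (isOpen_of_mem_countableBasis hc).measurableSet.prod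
    (chabauty_isOpen_setOf_inter_nonempty (isOpen_of_mem_countableBasis hb)).measurableSet

theorem measurableSet_setOf_exists_add_mem_of_isCompact [OpensMeasurableSpace G]
    [MetrizableSpace G] {Ω : Set (Set G)} (hΩ : MeasurableSet Ω)
    (hΩc : ∀ A ∈ Ω, IsClosed A) {D : Set G} (hD : IsCompact D) :
    MeasurableSet {p : G × Set G | p.2 ∈ Ω ∧ ∃ x ∈ p.2, x + p.1 ∈ D} := by
  let := metrizableSpaceMetric G
  have hthick : {p : G × Set G | p.2 ∈ Ω ∧ ∃ x ∈ p.2, x + p.1 ∈ D} = Prod.snd ⁻¹' Ω ∩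
      ⋂ n : ℕ, {p | ∃ x ∈ p.2, x + p.1 ∈ Metric.thickening (1 / ((n : ℝ) + 1)) D} := by
    ext ⟨g, A⟩
    simp only [mem_ofPred_eq, mem_inter_iff, mem_preimage, mem_iInter]
    refine and_congr_right fun hA => ?_
    have hcl : IsClosed ((· + g) '' A) := (Homeomorph.addRight g).isClosedMap _ (hΩc A hA)
    simpa only [Set.Nonempty, mem_inter_iff, exists_mem_image] using
      inter_nonempty_iff_forall_inter_thickening_nonempty hcl hD
  rw [hthick]
  exact (measurable_snd hΩ).inter
    (.iInter fun _ => measurableSet_setOf_exists_add_mem Metric.isOpen_thickening)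

theorem measure_setOf_inter_nonempty_eq_zero [BorelSpace G] [MetrizableSpace G]
    (μG : Measure G) [SFinite μG] [μG.IsAddLeftInvariant] [NeZero μG]
    (μ : Measure (Set G)) [SFinite μ] (hμ : ∀ g : G, μ.map (fun A => A - {g}) = μ)
    {Ω : Set (Set G)} (hΩ : IsClosed Ω)
    (hΩinv : ∀ g : G, (fun A : Set G => A - {g}) ⁻¹' Ω = Ω)
    (hΩc : ∀ A ∈ Ω, IsClosed A ∧ A.Countable) {D : Set G} (hD : IsCompact D) (hD0 : μG D = 0) :
    μ {A ∈ Ω | (A ∩ D).Nonempty} = 0 := by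
  set E := {p : G × Set G | p.2 ∈ Ω ∧ ∃ x ∈ p.2, x + p.1 ∈ D}
  have hE : MeasurableSet E :=
    measurableSet_setOf_exists_add_mem_of_isCompact hΩ.measurableSet (fun A hA => (hΩc A hA).1)
      hD
  have hnull_of_set : ∀ A, μG ((fun g => (g, A)) ⁻¹' E) = 0 := by
    intro A
    by_cases hA : A ∈ Ω
    · have hA' : (fun g => (g, A)) ⁻¹' E = ⋃ x ∈ A, (x + ·) ⁻¹' D := by ext; simp [E, hA]
      rw [hA', measure_biUnion_null_iff (hΩc A hA).2]
      exact fun x _ => (measure_preimage_add μG x D).trans hD0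
    · have hA' : (fun g => (g, A)) ⁻¹' E = ∅ := by ext; simp [E, hA]
      rw [hA', measure_empty]
  have hprod : μG.prod μ E = 0 := by
    rw [Measure.prod_apply_symm hE]
    simp [hnull_of_set]
  obtain ⟨g, hg⟩ := (Measure.measure_ae_null_of_prod_null hprod).exists
  have hslice_eq :
      Prod.mk g ⁻¹' E = (fun A : Set G => A - {-g}) ⁻¹' {A ∈ Ω | (A ∩ D).Nonempty} := by
    ext A
    refine and_congr (by rw [← mem_preimage (f := fun A : Set G => A - {-g}), hΩinv]) ?_
    simp only [Set.sub_singleton, Set.Nonempty, mem_inter_iff, exists_mem_image, sub_neg_eq_add]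
  have hS : MeasurableSet {A ∈ Ω | (A ∩ D).Nonempty} :=
    hΩ.measurableSet.inter (chabauty_isClosed_setOf_inter_nonempty hD).measurableSet
  rw [← hμ (-g), Measure.map_apply (chabauty_continuous_sub_singleton _).measurable hS, ← hslice_eq]
  exact hg

end Measure

theorem stmt19_general {G : Type*} [AddCommGroup G] [TopologicalSpace G] [IsTopologicalAddGroup G]
    [LocallyCompactSpace G] [SecondCountableTopology G] [MeasurableSpace G] [BorelSpace G]
    (μG : Measure G) [μG.IsAddHaarMeasure]
    (U : Set G) (hUo : IsOpen U) (hU0 : (0 : G) ∈ U) (hUb : IsCompact (closure U))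
    (P₀ : Set G) (hcl : IsClosed P₀) (hud : (P₀ - P₀) ∩ U = {0})
    (V : Set G) (hVo : IsOpen V)
    (hVJ : μG V = μG (closure V))
    (hVU : closure V - closure V ⊆ U)
    (μ : @Measure (Set G) (chabautyBorel G))
    (hprob : @IsProbabilityMeasure (Set G) (chabautyBorel G) μ)
    (hinv : ∀ g : G,
      @Measure.map (Set G) (Set G) (chabautyBorel G) (chabautyBorel G)
        (fun A : Set G => A - ({g} : Set G)) μ = μ) :
    μ ({A : Set G | (A ∩ V).Nonempty} ∩
        @closure (Set G) (chabautyTop G) (Set.range fun g : G => P₀ - ({g} : Set G))) =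
      μ (@closure (Set G) (chabautyTop G)
        ({A : Set G | (A ∩ V).Nonempty} ∩
          @closure (Set G) (chabautyTop G) (Set.range fun g : G => P₀ - ({g} : Set G)))) := by
  let := chabautyTop G
  let := chabautyBorel G
  change μ ({A : Set G | (A ∩ V).Nonempty} ∩ hull P₀) =
    μ (closure ({A : Set G | (A ∩ V).Nonempty} ∩ hull P₀))
  have hU : U ∈ 𝓝 0 := hUo.mem_nhds hU0
  have hP₀ : IsUniformlyDiscrete U P₀ := isUniformlyDiscrete_of_sub_inter_subset hud.subset
  have hP₀ne : P₀.Nonempty := by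
    by_contra h
    simp [not_nonempty_iff_eq_empty.1 h] at hud
  have : T1Space G := hP₀.t1Space hU hcl hP₀ne
  have hΩ (A : Set G) (hA : A ∈ hull P₀) : IsClosed A ∧ A.Countable :=
    ⟨(hP₀.of_mem_hull hUo hA).isClosed hU, (hP₀.of_mem_hull hUo hA).countable hU⟩
  have hVc : IsCompact (closure V) :=
    isCompact_of_sub_subset hUb isClosed_closure (hVU.trans subset_closure)
  have hD : μG (closure V \ V) = 0 := by
    rw [measure_sdiff subset_closure hVo.measurableSet.nullMeasurableSet
      ((measure_mono subset_closure).trans_lt hVc.measure_lt_top).ne, hVJ, tsub_self]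
  have hnull : μ {A ∈ hull P₀ | (A ∩ (closure V \ V)).Nonempty} = 0 :=
    measure_setOf_inter_nonempty_eq_zero μG μ hinv isClosed_closure
      (preimage_sub_singleton_hull P₀) hΩ (hVc.diff hVo) hD
  refine le_antisymm (measure_mono subset_closure) ?_
  calc _ ≤ μ (({A : Set G | (A ∩ V).Nonempty} ∩ hull P₀) ∪
          {A ∈ hull P₀ | (A ∩ (closure V \ V)).Nonempty}) :=
        measure_mono (chabauty_closure_inter_subset hVc isClosed_closure)
    _ ≤ _ := measure_union_le _ _
    _ = _ := by rw [hnull, add_zero]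

/-- Jordan measurability of the transversal neighbourhoods `O_V`: if `P₀` is `U`-uniformly
discrete (with `U` open and bounded), `V` is a nonempty open `m_G`-Jordan measurable set with
`closure V - closure V ⊆ U`, `Ω` is the hull of `P₀` (the Chabauty orbit closure), and `μ` is a
`G`-invariant Borel probability measure on `Ω`, then `O_V = {P ∈ Ω : P ∩ V ≠ ∅}` is `μ`-Jordan
measurable: `μ` of its (relative) interior `O_V` equals `μ` of its closure. -/
theorem stmt19 {G : Type*} [AddCommGroup G] [TopologicalSpace G] [IsTopologicalAddGroup G]
    [LocallyCompactSpace G] [SecondCountableTopology G] [MeasurableSpace G] [BorelSpace G]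
    (μG : Measure G) [μG.IsAddHaarMeasure]
    (U : Set G) (hUo : IsOpen U) (hU0 : (0 : G) ∈ U) (hUb : IsCompact (closure U))
    (P₀ : Set G) (hcl : IsClosed P₀) (hud : (P₀ - P₀) ∩ U = {0})
    (V : Set G) (hVo : IsOpen V) (hVne : V.Nonempty)
    (hVJ : μG V = μG (closure V))
    (hVU : closure V - closure V ⊆ U)
    (μ : @Measure (Set G) (chabautyBorel G))
    (hprob : @IsProbabilityMeasure (Set G) (chabautyBorel G) μ)
    (hinv : ∀ g : G,
      @Measure.map (Set G) (Set G) (chabautyBorel G) (chabautyBorel G)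
        (fun A : Set G => A - ({g} : Set G)) μ = μ)
    (hhull : μ (@closure (Set G) (chabautyTop G)
        (Set.range fun g : G => P₀ - ({g} : Set G)))ᶜ = 0) :
    μ ({A : Set G | (A ∩ V).Nonempty} ∩
        @closure (Set G) (chabautyTop G) (Set.range fun g : G => P₀ - ({g} : Set G))) =
      μ (@closure (Set G) (chabautyTop G)
        ({A : Set G | (A ∩ V).Nonempty} ∩
          @closure (Set G) (chabautyTop G) (Set.range fun g : G => P₀ - ({g} : Set G)))) :=
  stmt19_general μG U hUo hU0 hUb P₀ hcl hud V hVo hVJ hVU μ hprob hinv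
end
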